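/- arXiv:2404.01003 — 2 statements merged into one kernel-verified Lean document; each statement's English description precedes it below -/
import Mathlib

section
/- Let q and N be positive integers and let α : ℤ → ℂ be supported on the integers n with N < n ≤ 2N. Then ∑_{χ mod q} |∑_{n} α(n) χ(n)|² ≤ (N + q) · ∑_n |α(n)|², where the sum runs over all Dirichlet characters modulo q. -/
/-!
Group the sum by residue classes `b` modulo `q`. Orthogonality of characters turns the left-hand
side into `φ(q) ∑_{b unit} |∑_{n ≡ b} α(n)|²`; by Cauchy–Schwarz each class contributes at most
`#{n ≡ b} · ∑_{n ≡ b} |α(n)|²`, and an interval of length `N` meets a class in at most `N/q + 1`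
points, so `φ(q) · #{n ≡ b} ≤ q (N/q + 1) = N + q`.
-/

open Finset ComplexConjugate

theorem Finset.sum_mul_apply_eq_sum_fiberwise_mul {ι κ R : Type*} [Fintype κ] [DecidableEq κ]
    [NonUnitalNonAssocSemiring R] (s : Finset ι) (f : ι → κ) (α : ι → R) (g : κ → R) :
    ∑ i ∈ s, α i * g (f i) = ∑ k, (∑ i ∈ s with f i = k, α i) * g k := by
  rw [← sum_fiberwise s f]
  refine sum_congr rfl fun k _ => ?_
  rw [sum_mul]
  exact sum_congr rfl fun i hi => by rw [(mem_filter.mp hi).2]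

theorem norm_sum_sq_le_card_mul_sum_norm_sq {ι E : Type*} [SeminormedAddCommGroup E]
    (s : Finset ι) (f : ι → E) : ‖∑ i ∈ s, f i‖ ^ 2 ≤ #s * ∑ i ∈ s, ‖f i‖ ^ 2 :=
  (pow_le_pow_left₀ (norm_nonneg _) (norm_sum_le s f) 2).trans sq_sum_le_card_mul_sum_sq

theorem Int.card_filter_modEq_Ioc_mul_le (a v : ℤ) (N : ℕ) {r : ℕ} (hr : 0 < r) :
    r * #{x ∈ Ioc a (a + N) | x ≡ v [ZMOD r]} ≤ N + r := by
  have hrq : (0 : ℚ) < r := by exact_mod_cast hr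
  have hcard : (#{x ∈ Ioc a (a + N) | x ≡ v [ZMOD r]} : ℚ) < N / r + 1 := by
    have hD : (⌊(a + N - v) / (r : ℚ)⌋ : ℚ) - ⌊(a - v) / (r : ℚ)⌋ < N / r + 1 := by
      have h1 := Int.floor_le ((a + N - v) / (r : ℚ))
      have h2 := Int.lt_floor_add_one ((a - v) / (r : ℚ))
      have : (a + N - v) / (r : ℚ) = (a - v) / r + N / r := by ring
      linarith
    have key := congrArg (fun z : ℤ => (z : ℚ))
      (Int.Ioc_filter_modEq_card a (a + N) (r := r) (by exact_mod_cast hr) v)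
    push_cast at key
    rw [key, max_lt_iff]
    exact ⟨hD, by positivity⟩
  have : (r * #{x ∈ Ioc a (a + N) | x ≡ v [ZMOD r]} : ℚ) < N + r := by
    calc _ < (r : ℚ) * (N / r + 1) := mul_lt_mul_of_pos_left hcard hrq
      _ = N + r := by field_simp
  exact_mod_cast this.le

namespace ZMod

variable {q : ℕ} [NeZero q]

theorem card_filter_intCast_eq_Ioc_mul_le (a : ℤ) (N : ℕ) (b : ZMod q) :
    q * #{n ∈ Ioc a (a + N) | ((n : ℤ) : ZMod q) = b} ≤ N + q := by
  have hb : ∀ n : ℤ, (n : ZMod q) = b ↔ n ≡ b.cast [ZMOD q] := fun n => by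
    rw [← intCast_eq_intCast_iff, intCast_cast, cast_id]
  simp_rw [hb]
  exact Int.card_filter_modEq_Ioc_mul_le a _ N (NeZero.pos q)

theorem mul_norm_sq_sum_filter_intCast_eq_Ioc_le {E : Type*} [SeminormedAddCommGroup E]
    (a : ℤ) (N : ℕ) (b : ZMod q) (α : ℤ → E) :
    q * ‖∑ n ∈ Ioc a (a + N) with ((n : ℤ) : ZMod q) = b, α n‖ ^ 2 ≤
      (N + q) * ∑ n ∈ Ioc a (a + N) with ((n : ℤ) : ZMod q) = b, ‖α n‖ ^ 2 := by
  have hcard : (q : ℝ) * #{n ∈ Ioc a (a + N) | ((n : ℤ) : ZMod q) = b} ≤ N + q := by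
    exact_mod_cast card_filter_intCast_eq_Ioc_mul_le a N b
  calc _ ≤ (q : ℝ) * (#{n ∈ Ioc a (a + N) | ((n : ℤ) : ZMod q) = b} *
          ∑ n ∈ Ioc a (a + N) with ((n : ℤ) : ZMod q) = b, ‖α n‖ ^ 2) := by
        gcongr
        exact norm_sum_sq_le_card_mul_sum_norm_sq _ _
    _ ≤ _ := by
        rw [← mul_assoc]
        gcongr

end ZMod

namespace DirichletCharacter

variable {q : ℕ}

theorem conj_apply_of_isUnit (χ : DirichletCharacter ℂ q) {b : ZMod q} (hb : IsUnit b) :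
    conj (χ b) = χ b⁻¹ := by
  obtain ⟨u, rfl⟩ := hb
  rw [← Complex.star_def, MulChar.star_apply', MulChar.inv_apply, Ring.inverse_unit,
    ZMod.inv_coe_unit]

variable [NeZero q]

theorem sum_apply_mul_conj_apply (a b : ZMod q) :
    ∑ χ : DirichletCharacter ℂ q, χ a * conj (χ b) =
      if IsUnit b ∧ b = a then (q.totient : ℂ) else 0 := by
  by_cases hb : IsUnit b
  · calc ∑ χ : DirichletCharacter ℂ q, χ a * conj (χ b)
        _ = ∑ χ : DirichletCharacter ℂ q, χ b⁻¹ * χ a :=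
          sum_congr rfl fun χ _ => by rw [conj_apply_of_isUnit χ hb, mul_comm]
        _ = _ := by simp [sum_char_inv_mul_char_eq ℂ hb, hb]
  · simp [MulChar.map_nonunit _ hb, hb]

theorem sum_norm_sq_sum_mul_eq (f : ZMod q → ℂ) :
    ∑ χ : DirichletCharacter ℂ q, ‖∑ a, f a * χ a‖ ^ 2 =
      q.totient * ∑ a with IsUnit a, ‖f a‖ ^ 2 := by
  apply Complex.ofReal_injective
  push_cast
  simp_rw [← Complex.mul_conj', map_sum, map_mul, sum_mul_sum]
  calc ∑ χ : DirichletCharacter ℂ q, ∑ a, ∑ b, f a * χ a * (conj (f b) * conj (χ b))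
    _ = ∑ a, ∑ b, f a * conj (f b) * ∑ χ : DirichletCharacter ℂ q, χ a * conj (χ b) := by
      rw [sum_comm]
      refine sum_congr rfl fun a _ => ?_
      rw [sum_comm]
      refine sum_congr rfl fun b _ => ?_
      rw [mul_sum]
      exact sum_congr rfl fun χ _ => by ring
    _ = _ := by
      simp_rw [sum_apply_mul_conj_apply, mul_ite, mul_zero, and_comm, ite_and, sum_ite_eq',
        mem_univ, if_true, sum_filter, mul_sum, mul_ite, mul_zero, mul_comm]

end DirichletCharacter

theorem dirichlet_mean_square_le_general (q N : ℕ) [NeZero q]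
    (α : ℤ → ℂ) :
    ∑ χ : DirichletCharacter ℂ q,
        ‖∑ n ∈ Finset.Ioc (N : ℤ) (2 * N), α n * χ (n : ZMod q)‖ ^ 2
      ≤ ((N : ℝ) + q) * ∑ n ∈ Finset.Ioc (N : ℤ) (2 * N), ‖α n‖ ^ 2 := by
  rw [two_mul]
  set S := Ioc (N : ℤ) (N + N)
  set T : ZMod q → ℂ := fun b => ∑ n ∈ S with ((n : ℤ) : ZMod q) = b, α n
  calc ∑ χ : DirichletCharacter ℂ q, ‖∑ n ∈ S, α n * χ (n : ZMod q)‖ ^ 2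
    _ = ∑ χ : DirichletCharacter ℂ q, ‖∑ b, T b * χ b‖ ^ 2 := by
      refine sum_congr rfl fun χ _ => ?_
      rw [sum_mul_apply_eq_sum_fiberwise_mul]
    _ = q.totient * ∑ b with IsUnit b, ‖T b‖ ^ 2 := DirichletCharacter.sum_norm_sq_sum_mul_eq T
    _ ≤ q * ∑ b, ‖T b‖ ^ 2 := by
      gcongr
      · exact Nat.totient_le q
      · exact subset_univ _
    _ ≤ ∑ b, ((N : ℝ) + q) * ∑ n ∈ S with ((n : ℤ) : ZMod q) = b, ‖α n‖ ^ 2 := by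
      rw [mul_sum]
      refine sum_le_sum fun b _ => ?_
      exact ZMod.mul_norm_sq_sum_filter_intCast_eq_Ioc_le _ N b α
    _ = ((N : ℝ) + q) * ∑ n ∈ S, ‖α n‖ ^ 2 := by rw [← mul_sum, sum_fiberwise]

/-- Large-sieve type bound: if `α : ℤ → ℂ` is supported on `N < n ≤ 2N`, then
`∑_{χ mod q} |∑_n α(n) χ(n)|² ≤ (N + q) ∑_n |α(n)|²`. -/
theorem dirichlet_mean_square_le (q N : ℕ) (hq : 0 < q) (hN : 0 < N) [NeZero q]
    (α : ℤ → ℂ) (hsupp : ∀ n : ℤ, α n ≠ 0 → n ∈ Finset.Ioc (N : ℤ) (2 * N)) :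
    ∑ χ : DirichletCharacter ℂ q,
        ‖∑ n ∈ Finset.Ioc (N : ℤ) (2 * N), α n * χ (n : ZMod q)‖ ^ 2
      ≤ ((N : ℝ) + q) * ∑ n ∈ Finset.Ioc (N : ℤ) (2 * N), ‖α n‖ ^ 2 :=
  dirichlet_mean_square_le_general q N α
end

section
/- Define the map A on triples of real numbers with κ > −1 by A(κ, λ, ν) = (κ/(2(κ+1)), (κ+λ+1)/(2(κ+1)), κ/(2(κ+1))). For every integer k ≥ 2, applying A exactly (k−1) times to the triple (1/2, 1/2, 1) yields the triple (1/(2^{k+1} − 2), 1 − k/(2^{k+1} − 2), 1/(2^{k+1} − 2)). -/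
/-- The `A`-process on arithmetic exponent pairs. -/
noncomputable def Amap : ℝ × ℝ × ℝ → ℝ × ℝ × ℝ :=
  fun p => (p.1 / (2 * (p.1 + 1)), (p.1 + p.2.1 + 1) / (2 * (p.1 + 1)), p.1 / (2 * (p.1 + 1)))

/- The denominators follow `d ↦ 2d + 2`, whose solution starting from `d = 6` is `2^(k+1) - 2`. -/
theorem Amap_one_div (d x : ℝ) (hd : d ≠ 0) (hd₁ : d + 1 ≠ 0) :
    Amap (1 / d, 1 - x / d, 1 / d)
      = (1 / (2 * d + 2), 1 - (x + 1) / (2 * d + 2), 1 / (2 * d + 2)) := by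
  have h : 1 + d ≠ 0 := by rwa [add_comm]
  simp only [Amap, Prod.mk.injEq]
  refine ⟨?_, ?_, ?_⟩ <;> field_simp <;> ring

/-- Applying `A` exactly `k−1` times to `(1/2, 1/2, 1)` yields
`(1/(2^{k+1}−2), 1 − k/(2^{k+1}−2), 1/(2^{k+1}−2))` for every `k ≥ 2`. -/
theorem Amap_iterate (k : ℕ) (hk : 2 ≤ k) :
    Amap^[k - 1] ((1/2 : ℝ), (1/2 : ℝ), (1 : ℝ))
      = (1 / ((2 : ℝ) ^ (k + 1) - 2), 1 - (k : ℝ) / ((2 : ℝ) ^ (k + 1) - 2),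
          1 / ((2 : ℝ) ^ (k + 1) - 2)) := by
  induction k, hk using Nat.le_induction with
  | base => norm_num [Amap]
  | succ k hk ih =>
    have hpow : (4 : ℝ) ≤ 2 ^ (k + 1) :=
      calc (4 : ℝ) = 2 ^ 2 := by norm_num
        _ ≤ 2 ^ (k + 1) := pow_le_pow_right₀ (by norm_num) (by omega)
    rw [show k + 1 - 1 = (k - 1) + 1 by omega, Function.iterate_succ_apply', ih,
      Amap_one_div _ _ (by linarith) (by linarith)]
    have hd : 2 * ((2 : ℝ) ^ (k + 1) - 2) + 2 = 2 ^ (k + 1 + 1) - 2 := by ring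
    rw [hd, Nat.cast_succ]
end
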